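/- Let p be an odd prime, n a positive integer, and r any integer. Define S_1(n,r) = p^{−⌊(n−1)/(p−1)⌋} Σ_{k ≡ r (mod p)} (−1)^k C(n,k) and S_2(n,r) = p^{−⌊(n−1)/(p−1)⌋} Σ_{k ≡ pr (mod p²)} (−1)^k C(pn,k). Then S_1(n,r) ≡ S_2(n,r) (mod p). -/

import Mathlib

/-- `∑_{k ≡ r (mod p), 0 ≤ k ≤ n} (-1)^k C(n,k)`. -/
def S1sum (p n : ℕ) (r : ℤ) : ℤ :=
  ∑ k ∈ Finset.range (n + 1), if (k : ℤ) ≡ r [ZMOD p] then (-1) ^ k * (n.choose k : ℤ) else 0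

/-- `S_1(n,r) = p^{-⌊(n-1)/(p-1)⌋} ∑_{k ≡ r (p)} (-1)^k C(n,k)`. -/
def S1 (p n : ℕ) (r : ℤ) : ℤ := S1sum p n r / (p : ℤ) ^ ((n - 1) / (p - 1))

/-- `∑_{k ≡ pr (mod p²), 0 ≤ k ≤ pn} (-1)^k C(pn,k)`. -/
def S2sum (p n : ℕ) (r : ℤ) : ℤ :=
  ∑ k ∈ Finset.range (p * n + 1),
    if (k : ℤ) ≡ (p : ℤ) * r [ZMOD (p ^ 2 : ℕ)] then (-1) ^ k * ((p * n).choose k : ℤ) else 0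

/-- `S_2(n,r) = p^{-⌊(n-1)/(p-1)⌋} ∑_{k ≡ pr (p²)} (-1)^k C(pn,k)`. -/
def S2 (p n : ℕ) (r : ℤ) : ℤ := S2sum p n r / (p : ℤ) ^ ((n - 1) / (p - 1))

/-!
In the group ring `ℤ[ℤ/p²]` with generator `x` and `y = x ^ p`, the sum `S1sum p n r` is the
coefficient of `x ^ (p r)` in `(1 - y) ^ n`, and `S2sum p n r` is the same coefficient of
`(1 - x) ^ (p n) = ((1 - y) + p h) ^ n`, where `h` is supported on exponents prime to `p`.
Since `y ^ p = 1`, `(1 - y) ^ p` is divisible by `p (1 - y)`, so `p ^ ⌊(m - 1)/(p - 1)⌋` divides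
`(1 - y) ^ m` (Weisman). In the binomial expansion of `((1 - y) + p h) ^ n`, the linear term has no
coefficients at multiples of `p`, and for `p ≥ 3` every term of degree `i ≥ 2` in `h` is divisible
by `p ^ (i + ⌊(n - i - 1)/(p - 1)⌋)`, hence by `p ^ (⌊(n - 1)/(p - 1)⌋ + 1)`.
-/

open Finset

theorem pow_sub_one_div_dvd_pow_of_mul_dvd_pow_succ {M : Type*} [CommMonoid M] {a c : M}
    {q : ℕ} (h : c * a ∣ a ^ (q + 1)) (m : ℕ) : c ^ ((m - 1) / q) ∣ a ^ m := by
  induction m using Nat.strong_induction_on with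
  | _ m ih =>
    rcases Nat.lt_or_ge q m with hqm | hmq
    · obtain ⟨m, rfl⟩ : ∃ m', m = m' + 1 + q := ⟨m - q - 1, by omega⟩
      rcases q.eq_zero_or_pos with rfl | hq
      · simp
      have hdiv : (m + 1 + q - 1) / q = m / q + 1 := by
        rw [show m + 1 + q - 1 = m + q by omega, Nat.add_div_right _ hq]
      calc c ^ ((m + 1 + q - 1) / q) = c ^ ((m + 1 - 1) / q) * c := by rw [hdiv, pow_succ]; rfl
        _ ∣ a ^ (m + 1) * c := mul_dvd_mul_right (ih _ (by omega)) c
        _ = a ^ m * (c * a) := by rw [pow_succ]; ac_rfl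
        _ ∣ a ^ m * a ^ (q + 1) := mul_dvd_mul_left _ h
        _ = a ^ (m + 1 + q) := by rw [← pow_add, add_comm q, add_assoc]
    · rw [Nat.div_eq_zero_iff.mpr (by omega), pow_zero]
      exact one_dvd _

theorem natCast_mul_one_sub_dvd_one_sub_pow {R : Type*} [CommRing R] {p : ℕ} (hp : p.Prime)
    {y : R} (hy : y ^ p = 1) : (p : R) * (1 - y) ∣ (1 - y) ^ p := by
  obtain ⟨r, hr⟩ := exists_add_pow_prime_eq hp (1 - y) y
  rw [sub_add_cancel, one_pow, hy] at hr
  exact ⟨-(y * r), by linear_combination -hr⟩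

theorem natCast_pow_dvd_one_sub_pow {R : Type*} [CommRing R] {p : ℕ} (hp : p.Prime)
    {y : R} (hy : y ^ p = 1) (m : ℕ) : (p : R) ^ ((m - 1) / (p - 1)) ∣ (1 - y) ^ m :=
  pow_sub_one_div_dvd_pow_of_mul_dvd_pow_succ
    (by rw [Nat.sub_add_cancel hp.one_le]; exact natCast_mul_one_sub_dvd_one_sub_pow hp hy) m

theorem Nat.sub_one_div_lt_add_sub_sub_one_div {n i q : ℕ} (hq : 2 ≤ q) (hi : 2 ≤ i) :
    (n - 1) / q < i + (n - i - 1) / q := by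
  have hmod := Nat.lt_div_mul_add (a := n - i - 1) (by omega : 0 < q)
  have hiq : i + q ≤ i * q := by nlinarith
  rw [Nat.div_lt_iff_lt_mul (by omega), add_mul]
  omega

theorem add_pow_sub_pow_sub_mul_eq_sum {R : Type*} [CommRing R] (a b : R) (n : ℕ) :
    (a + b) ^ n - a ^ n - n * b * a ^ (n - 1) =
      ∑ i ∈ Ico 2 (n + 1), b ^ i * a ^ (n - i) * n.choose i := by
  rcases n with _ | n
  · simp
  rw [add_comm, add_pow, range_eq_Ico,
    ← sum_Ico_consecutive _ (by omega : 0 ≤ 2) (by omega : 2 ≤ n + 1 + 1), ← range_eq_Ico]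
  simp only [sum_range_succ, range_one, sum_singleton, pow_zero, tsub_zero, one_mul,
    Nat.choose_zero_right, Nat.cast_one, mul_one, pow_one, add_tsub_cancel_right,
    Nat.choose_one_right, Nat.cast_add]
  ring

theorem natCast_pow_succ_dvd_one_sub_add_pow_sub {R : Type*} [CommRing R] {p : ℕ}
    (hp : p.Prime) (hodd : Odd p) {y : R} (hy : y ^ p = 1) (h : R) (n : ℕ) :
    (p : R) ^ ((n - 1) / (p - 1) + 1) ∣
      (1 - y + p * h) ^ n - (1 - y) ^ n - n * (p * h) * (1 - y) ^ (n - 1) := by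
  have hp_sub_one : 2 ≤ p - 1 := by
    have := hp.two_le
    have := Nat.odd_iff.mp hodd
    omega
  rw [add_pow_sub_pow_sub_mul_eq_sum]
  refine dvd_sum fun i hi => ?_
  calc (p : R) ^ ((n - 1) / (p - 1) + 1) ∣ (p : R) ^ i * (p : R) ^ ((n - i - 1) / (p - 1)) := by
        rw [← pow_add]
        exact pow_dvd_pow _ (Nat.sub_one_div_lt_add_sub_sub_one_div hp_sub_one (mem_Ico.mp hi).1)
    _ ∣ (p * h) ^ i * (1 - y) ^ (n - i) :=
        mul_dvd_mul (mul_pow (p : R) h i ▸ dvd_mul_right _ _)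
          (natCast_pow_dvd_one_sub_pow hp hy _)
    _ ∣ (p * h) ^ i * (1 - y) ^ (n - i) * n.choose i := dvd_mul_right _ _

theorem Int.ediv_modEq_ediv_of_mul_dvd_sub {a b c q : ℤ} (ha : c ∣ a) (hab : c * q ∣ b - a) :
    a / c ≡ b / c [ZMOD q] := by
  obtain ⟨a, rfl⟩ := ha
  obtain ⟨d, hd⟩ := hab
  obtain rfl : b = c * (a + q * d) := by linear_combination hd
  rcases eq_or_ne c 0 with rfl | hc
  · simp [Int.ModEq]
  rw [Int.mul_ediv_cancel_left _ hc, Int.mul_ediv_cancel_left _ hc]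
  exact Int.modEq_iff_dvd.mpr ⟨d, by ring⟩

namespace AddMonoidAlgebra

theorem neg_single_one_pow_mul_natCast {k G : Type*} [CommRing k] [AddCommMonoid G] (g : G)
    (j m : ℕ) :
    (-single g 1 : k[G]) ^ j * m = single (j • g) ((-1) ^ j * (m : k)) := by
  rw [← single_neg, single_pow, natCast_def, single_mul_single, add_zero]

theorem coeff_one_sub_single_pow {k G : Type*} [CommRing k] [AddCommMonoid G] [DecidableEq G]
    (g : G) (N : ℕ) (s : G) :
    ((1 - single g 1 : k[G]) ^ N).coeff s =
      ∑ j ∈ range (N + 1), if j • g = s then (-1) ^ j * (N.choose j : k) else 0 := by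
  rw [sub_eq_neg_add, add_pow, coeff_sum, Finsupp.finsetSum_apply]
  refine sum_congr rfl fun j _ => ?_
  rw [one_pow, mul_one, neg_single_one_pow_mul_natCast, coeff_single, Finsupp.single_apply]

theorem natCast_pow_dvd_coeff {k G : Type*} [CommSemiring k] [AddMonoid G] {m e : ℕ}
    {f : k[G]} (h : (m : k[G]) ^ e ∣ f) (s : G) :
    (m : k) ^ e ∣ f.coeff s := by
  obtain ⟨g, rfl⟩ := h
  rw [← Nat.cast_pow (α := k[G]), ← nsmul_eq_mul, coeff_smul_apply, nsmul_eq_mul,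
    Nat.cast_pow]
  exact dvd_mul_right _ _

theorem coeff_mul_eq_zero_of_mem {k G : Type*} [Semiring k] [AddGroup G] {H : AddSubgroup G}
    {f g : k[G]} (hf : ∀ t ∈ H, f.coeff t = 0) (hg : ∀ t ∉ H, g.coeff t = 0)
    {s : G} (hs : s ∈ H) : (f * g).coeff s = 0 := by
  classical
  by_contra hne
  obtain ⟨u, hu, v, hv, rfl⟩ :=
    Finset.mem_add.mp (support_coeff_mul_subset f g (Finsupp.mem_support_iff.mpr hne))
  have hvH : v ∈ H := by_contra fun h => Finsupp.mem_support_iff.mp hv (hg v h)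
  exact Finsupp.mem_support_iff.mp hu
    (hf u (by simpa using H.sub_mem hs hvH))

theorem exists_one_sub_single_pow_eq {k G : Type*} [CommRing k] [AddCommMonoid G] {p : ℕ}
    (hp : p.Prime) (hodd : Odd p) (g : G) :
    ∃ h : k[G],
      (1 - single g 1 : k[G]) ^ p = 1 - single (p • g) 1 + (p : k[G]) * h ∧
        ∀ t, (∀ j ∈ Ioo 0 p, j • g ≠ t) → h.coeff t = 0 := by
  refine ⟨∑ j ∈ Ioo 0 p, single (j • g) ((-1) ^ j * ((p.choose j / p : ℕ) : k)), ?_, ?_⟩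
  · rw [sub_eq_neg_add, add_pow_prime_eq' hp, hodd.neg_pow]
    simp only [single_pow, one_pow, mul_one, neg_single_one_pow_mul_natCast, sub_eq_neg_add]
  · intro t ht
    rw [coeff_sum, Finsupp.finsetSum_apply]
    refine sum_eq_zero fun j hj => ?_
    rw [coeff_single, Finsupp.single_eq_of_ne]
    exact (ht j hj).symm

end AddMonoidAlgebra

open AddMonoidAlgebra

theorem single_natCast_pow_eq_one (p : ℕ) :
    (single (p : ZMod (p ^ 2)) 1 : ℤ[ZMod (p ^ 2)]) ^ p = 1 := by
  rw [single_pow, one_pow, nsmul_eq_mul, ← Nat.cast_mul, ← sq, ZMod.natCast_self]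
  rfl

theorem S2sum_eq_coeff (p n : ℕ) (r : ℤ) :
    S2sum p n r = ((1 - single 1 1 : ℤ[ZMod (p ^ 2)]) ^ (p * n)).coeff
      ((p * r : ℤ) : ZMod (p ^ 2)) := by
  rw [coeff_one_sub_single_pow]
  refine sum_congr rfl fun k _ => if_congr ?_ rfl rfl
  rw [← ZMod.intCast_eq_intCast_iff]
  push_cast
  rw [nsmul_one]

theorem S1sum_eq_coeff {p : ℕ} (hp : p ≠ 0) (n : ℕ) (r : ℤ) :
    S1sum p n r = ((1 - single (p : ZMod (p ^ 2)) 1 : ℤ[ZMod (p ^ 2)]) ^ n).coeff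
      ((p * r : ℤ) : ZMod (p ^ 2)) := by
  rw [coeff_one_sub_single_pow]
  refine sum_congr rfl fun k _ => if_congr ?_ rfl rfl
  rw [nsmul_eq_mul, show (k : ZMod (p ^ 2)) * p = ((k * p : ℤ) : ZMod (p ^ 2)) by push_cast; rfl,
    ZMod.intCast_eq_intCast_iff, Int.modEq_iff_dvd, Int.modEq_iff_dvd]
  push_cast
  rw [show (p : ℤ) * r - k * p = p * (r - k) by ring, sq]
  exact (mul_dvd_mul_iff_left (by exact_mod_cast hp)).symm

theorem pow_dvd_S1sum {p : ℕ} (hp : p.Prime) (n : ℕ) (r : ℤ) :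
    (p : ℤ) ^ ((n - 1) / (p - 1)) ∣ S1sum p n r := by
  rw [S1sum_eq_coeff hp.ne_zero]
  exact natCast_pow_dvd_coeff (natCast_pow_dvd_one_sub_pow hp (single_natCast_pow_eq_one p) n) _

theorem coeff_mul_one_sub_single_natCast_pow_eq_zero {p : ℕ} {f : ℤ[ZMod (p ^ 2)]}
    (hf : ∀ t, ZMod.castHom (dvd_pow_self p two_ne_zero) (ZMod p) t = 0 → f.coeff t = 0)
    (m : ℕ)
    {s : ZMod (p ^ 2)} (hs : ZMod.castHom (dvd_pow_self p two_ne_zero) (ZMod p) s = 0) :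
    (f * (1 - single (p : ZMod (p ^ 2)) 1) ^ m).coeff s = 0 := by
  refine coeff_mul_eq_zero_of_mem
    (H := (ZMod.castHom (dvd_pow_self p two_ne_zero) (ZMod p)).toAddMonoidHom.ker) hf
    (fun t ht => ?_) hs
  rw [coeff_one_sub_single_pow]
  refine sum_eq_zero fun j _ => if_neg ?_
  rintro rfl
  simp at ht

theorem exists_one_sub_single_one_pow_eq {p : ℕ} (hp : p.Prime) (hodd : Odd p) :
    ∃ h : ℤ[ZMod (p ^ 2)],
      (1 - single 1 1 : ℤ[ZMod (p ^ 2)]) ^ p =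
          1 - single (p : ZMod (p ^ 2)) 1 + (p : ℤ[ZMod (p ^ 2)]) * h ∧
        ∀ t, ZMod.castHom (dvd_pow_self p two_ne_zero) (ZMod p) t = 0 → h.coeff t = 0 := by
  obtain ⟨h, hpow, hh⟩ := exists_one_sub_single_pow_eq (k := ℤ) hp hodd (1 : ZMod (p ^ 2))
  refine ⟨h, by rwa [nsmul_one] at hpow, fun t ht => hh t fun j hj hjt => ?_⟩
  rw [← hjt, map_nsmul, map_one, nsmul_one, ZMod.natCast_eq_zero_iff] at ht
  exact Nat.not_dvd_of_pos_of_lt (mem_Ioo.mp hj).1 (mem_Ioo.mp hj).2 ht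

theorem pow_succ_dvd_S2sum_sub_S1sum {p : ℕ} (hp : p.Prime) (hodd : Odd p) (n : ℕ) (r : ℤ) :
    (p : ℤ) ^ ((n - 1) / (p - 1) + 1) ∣ S2sum p n r - S1sum p n r := by
  obtain ⟨h, hpow, hh⟩ := exists_one_sub_single_one_pow_eq hp hodd
  have key := natCast_pow_dvd_coeff
    (natCast_pow_succ_dvd_one_sub_add_pow_sub hp hodd (single_natCast_pow_eq_one p) h n)
    ((p * r : ℤ) : ZMod (p ^ 2))
  have hlinear : (((n * p : ℕ) : ℤ[ZMod (p ^ 2)]) *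
      (h * (1 - single (p : ZMod (p ^ 2)) 1) ^ (n - 1))).coeff ((p * r : ℤ) : ZMod (p ^ 2)) =
        0 := by
    rw [← nsmul_eq_mul, coeff_smul_apply,
      coeff_mul_one_sub_single_natCast_pow_eq_zero hh _ (by simp), smul_zero]
  rw [← mul_assoc, ← Nat.cast_mul, mul_assoc, coeff_sub, Finsupp.sub_apply, hlinear, sub_zero,
    coeff_sub, Finsupp.sub_apply] at key
  rwa [S2sum_eq_coeff, S1sum_eq_coeff hp.ne_zero, pow_mul, hpow]

theorem stmt14_general (p n : ℕ) (r : ℤ) (hp : p.Prime) (hodd : Odd p) :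
    S1 p n r ≡ S2 p n r [ZMOD p] :=
  Int.ediv_modEq_ediv_of_mul_dvd_sub (pow_dvd_S1sum hp n r)
    (by rw [← pow_succ]; exact pow_succ_dvd_S2sum_sub_S1sum hp hodd n r)

theorem stmt14 (p n : ℕ) (r : ℤ) (hp : p.Prime) (hodd : Odd p) (hn : 1 ≤ n) :
    S1 p n r ≡ S2 p n r [ZMOD p] :=
  stmt14_general p n r hp hodd
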